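/- Let G : ℝ^{d_x} × ℝ^{d_y} → ℝ be L₂-smooth with L₂ > 0. Then: (i) for every γ > 0 and every (x,y), G(x,y) − V_γ(x,y) ≥ 0; and (ii) if γ ∈ (0, 1/(2L₂)), then G(x,y) = V_γ(x,y) if and only if ∇_y G(x,y) = 0. Consequently, for γ ∈ (0, 1/(2L₂)) the feasible set { (x,y) : G(x,y) − V_γ(x,y) ≤ 0 } coincides with { (x,y) : ∇_y G(x,y) = 0 } and is independent of γ. -/
import Mathlib


open scoped RealInnerProductSpace

noncomputable section

/-- `Euc d` is the Euclidean space `ℝ^d`. -/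
abbrev Euc (d : ℕ) : Type := EuclideanSpace ℝ (Fin d)

/-- Gradient of `h` with respect to the first block of variables. -/
noncomputable def gradx {dx dy : ℕ} (h : Euc dx → Euc dy → ℝ) (x : Euc dx) (y : Euc dy) :
    Euc dx :=
  gradient (fun x' => h x' y) x

/-- Gradient of `h` with respect to the second block of variables. -/
noncomputable def grady {dx dy : ℕ} (h : Euc dx → Euc dy → ℝ) (x : Euc dx) (y : Euc dy) :
    Euc dy :=
  gradient (fun y' => h x y') y

/-- The ℓ²-norm of a pair of vectors (the norm on the product `ℝ^{d_x} × ℝ^{d_y}`). -/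
noncomputable def pnorm {dx dy : ℕ} (a : Euc dx) (b : Euc dy) : ℝ :=
  Real.sqrt (‖a‖ ^ 2 + ‖b‖ ^ 2)

/-- `h : ℝ^{d_x} × ℝ^{d_y} → ℝ` is `L`-smooth: it is differentiable and its gradient is
`L`-Lipschitz with respect to the ℓ² product norm. -/
def LSmooth {dx dy : ℕ} (L : ℝ) (h : Euc dx → Euc dy → ℝ) : Prop :=
  (∀ y, Differentiable ℝ fun x => h x y) ∧ (∀ x, Differentiable ℝ fun y => h x y) ∧
    ∀ x y x' y',
      pnorm (gradx h x y - gradx h x' y') (grady h x y - grady h x' y') ≤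
        L * pnorm (x - x') (y - y')

/-- The Moreau envelope `V_γ` of `G`. -/
noncomputable def moreau {dx dy : ℕ} (G : Euc dx → Euc dy → ℝ) (γ : ℝ)
    (x : Euc dx) (y : Euc dy) : ℝ :=
  ⨅ θ : Euc dy, (G x θ + ‖θ - y‖ ^ 2 / (2 * γ))

lemma pnorm_right_le {dx dy : ℕ} (a : Euc dx) (b : Euc dy) : ‖b‖ ≤ pnorm a b := by
  unfold pnorm
  calc ‖b‖ = Real.sqrt (‖b‖ ^ 2) := (Real.sqrt_sq (norm_nonneg b)).symm
    _ ≤ Real.sqrt (‖a‖ ^ 2 + ‖b‖ ^ 2) :=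
        Real.sqrt_le_sqrt (le_add_of_nonneg_left (sq_nonneg _))

lemma pnorm_zero_left {dx dy : ℕ} (b : Euc dy) : pnorm (0 : Euc dx) b = ‖b‖ := by
  unfold pnorm
  simp [Real.sqrt_sq (norm_nonneg b)]

lemma grady_lipschitz {dx dy : ℕ} {L₂ : ℝ} {G : Euc dx → Euc dy → ℝ} (hG : LSmooth L₂ G)
    (x : Euc dx) (y y' : Euc dy) : ‖grady G x y - grady G x y'‖ ≤ L₂ * ‖y - y'‖ := by
  calc ‖grady G x y - grady G x y'‖
      ≤ pnorm (gradx G x y - gradx G x y') (grady G x y - grady G x y') :=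
        pnorm_right_le _ _
    _ ≤ L₂ * pnorm (x - x) (y - y') := hG.2.2 x y x y'
    _ = L₂ * ‖y - y'‖ := by rw [sub_self, pnorm_zero_left]

lemma fderiv_eq_toDual_grady {dx dy : ℕ} {L₂ : ℝ} {G : Euc dx → Euc dy → ℝ}
    (hG : LSmooth L₂ G) (x : Euc dx) (z : Euc dy) :
    fderiv ℝ (fun y' => G x y') z = InnerProductSpace.toDual ℝ (Euc dy) (grady G x z) :=
  ((hG.2.1 x z).hasGradientAt.hasFDerivAt).fderiv

/-- Descent-type lemma (with constant `L₂` instead of `L₂/2`). -/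
lemma descent {dx dy : ℕ} {L₂ : ℝ} (hL : 0 ≤ L₂) {G : Euc dx → Euc dy → ℝ} (hG : LSmooth L₂ G)
    (x : Euc dx) (y θ : Euc dy) :
    G x y + ⟪grady G x y, θ - y⟫ - L₂ * ‖θ - y‖ ^ 2 ≤ G x θ := by
  set f : Euc dy → ℝ := fun y' => G x y' with hf
  set g : Euc dy → Euc dy := fun z => grady G x z with hg
  have key : ‖f θ - f y - (InnerProductSpace.toDual ℝ (Euc dy) (g y)) (θ - y)‖ ≤
      (L₂ * ‖θ - y‖) * ‖θ - y‖ := by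
    have hf' : ∀ z ∈ segment ℝ y θ,
        HasFDerivWithinAt f (InnerProductSpace.toDual ℝ (Euc dy) (g z)) (segment ℝ y θ) z :=
      fun z _ => (((hG.2.1 x z).hasGradientAt.hasFDerivAt)).hasFDerivWithinAt
    have hbound : ∀ z ∈ segment ℝ y θ,
        ‖InnerProductSpace.toDual ℝ (Euc dy) (g z) -
          InnerProductSpace.toDual ℝ (Euc dy) (g y)‖ ≤ L₂ * ‖θ - y‖ := by
      intro z hz
      rw [← map_sub]
      rw [LinearIsometryEquiv.norm_map]
      have h1 : ‖g z - g y‖ ≤ L₂ * ‖z - y‖ := grady_lipschitz hG x z y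
      have h2 : ‖z - y‖ ≤ ‖θ - y‖ := by
        obtain ⟨a, b, ha, hb, hab, rfl⟩ := hz
        have : a • y + b • θ - y = b • (θ - y) := by
          rw [smul_sub]
          have : a • y = (1 - b) • y := by rw [← hab]; ring_nf
          rw [this, sub_smul, one_smul]
          abel
        rw [this, norm_smul, Real.norm_eq_abs, abs_of_nonneg hb]
        nlinarith [norm_nonneg (θ - y)]
      calc ‖g z - g y‖ ≤ L₂ * ‖z - y‖ := h1
        _ ≤ L₂ * ‖θ - y‖ := by nlinarith
    exact (convex_segment y θ).norm_image_sub_le_of_norm_hasFDerivWithin_le' hf' hbound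
      (left_mem_segment ℝ y θ) (right_mem_segment ℝ y θ)
  rw [InnerProductSpace.toDual_apply_apply, Real.norm_eq_abs, abs_le] at key
  have := key.1
  simp only [hf, hg] at this ⊢
  nlinarith [this]

/-- (i) `G(x,y) − V_γ(x,y) ≥ 0` for every `γ > 0` (whenever the infimum defining
`V_γ` is a genuine infimum, i.e. the inner objective is bounded below); (ii) for
`γ ∈ (0, 1/(2L₂))`, `G(x,y) = V_γ(x,y)` iff `∇_y G(x,y) = 0`, and consequently the feasible
set `{(x,y) : G(x,y) − V_γ(x,y) ≤ 0}` coincides with `{(x,y) : ∇_y G(x,y) = 0}` (hence is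
independent of `γ`). -/
theorem moreau_gap_nonneg_and_feasible_set {dx dy : ℕ} (L₂ : ℝ) (hL₂ : 0 < L₂)
    (G : Euc dx → Euc dy → ℝ) (hG : LSmooth L₂ G) :
    (∀ γ : ℝ, 0 < γ → ∀ (x : Euc dx) (y : Euc dy),
      BddBelow (Set.range fun θ : Euc dy => G x θ + ‖θ - y‖ ^ 2 / (2 * γ)) →
      0 ≤ G x y - moreau G γ x y) ∧
    (∀ γ : ℝ, 0 < γ → γ < 1 / (2 * L₂) →
      (∀ (x : Euc dx) (y : Euc dy), G x y = moreau G γ x y ↔ grady G x y = 0) ∧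
      {p : Euc dx × Euc dy | G p.1 p.2 - moreau G γ p.1 p.2 ≤ 0} =
        {p : Euc dx × Euc dy | grady G p.1 p.2 = 0}) := by
  have part1 : ∀ γ : ℝ, 0 < γ → ∀ (x : Euc dx) (y : Euc dy),
      BddBelow (Set.range fun θ : Euc dy => G x θ + ‖θ - y‖ ^ 2 / (2 * γ)) →
      0 ≤ G x y - moreau G γ x y := by
    intro γ hγ x y hbdd
    have h := ciInf_le hbdd y
    simp only [sub_self, norm_zero] at h
    have h' : moreau G γ x y ≤ G x y := by
      simpa [moreau] using h
    linarith
  refine ⟨part1, ?_⟩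
  intro γ hγ hγ'
  -- basic positivity of c := 1/(2γ) - L₂
  have hc : 0 < 1 / (2 * γ) - L₂ := by
    rw [lt_div_iff₀ (by positivity)] at hγ'
    rw [sub_pos, lt_div_iff₀ (by positivity)]
    nlinarith
  set c : ℝ := 1 / (2 * γ) - L₂ with hcdef
  -- lower bound on the inner objective
  have lower : ∀ (x : Euc dx) (y θ : Euc dy),
      G x y + ⟪grady G x y, θ - y⟫ + c * ‖θ - y‖ ^ 2 ≤ G x θ + ‖θ - y‖ ^ 2 / (2 * γ) := by
    intro x y θ
    have hd := descent hL₂.le hG x y θ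
    have he : ‖θ - y‖ ^ 2 / (2 * γ) = (1 / (2 * γ)) * ‖θ - y‖ ^ 2 := by ring
    rw [he]
    simp only [hcdef]
    nlinarith
  -- boundedness below
  have bdd : ∀ (x : Euc dx) (y : Euc dy),
      BddBelow (Set.range fun θ : Euc dy => G x θ + ‖θ - y‖ ^ 2 / (2 * γ)) := by
    intro x y
    refine ⟨G x y - ‖grady G x y‖ ^ 2 / (4 * c), ?_⟩
    rintro r ⟨θ, rfl⟩
    have h1 := lower x y θ
    set s := ‖grady G x y‖ with hs
    set t := ‖θ - y‖ with ht
    have hip : -(s * t) ≤ ⟪grady G x y, θ - y⟫ := by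
      have := abs_real_inner_le_norm (grady G x y) (θ - y)
      rw [abs_le] at this
      exact this.1
    have hquad : s * t - c * t ^ 2 ≤ s ^ 2 / (4 * c) := by
      rw [le_div_iff₀ (by positivity)]
      nlinarith [sq_nonneg (2 * c * t - s)]
    have : G x y - s ^ 2 / (4 * c) ≤ G x y + ⟪grady G x y, θ - y⟫ + c * t ^ 2 := by
      nlinarith
    linarith
  -- the equivalence
  have hiff : ∀ (x : Euc dx) (y : Euc dy), G x y = moreau G γ x y ↔ grady G x y = 0 := by
    intro x y
    constructor
    · intro h
      -- y is a global minimizer of F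
      set F : Euc dy → ℝ := fun θ => G x θ + ‖θ - y‖ ^ 2 / (2 * γ) with hF
      have hFy : F y = G x y := by simp [hF]
      have hmin : ∀ θ, F y ≤ F θ := by
        intro θ
        rw [hFy, h]
        exact ciInf_le (bdd x y) θ
      have hlocF : IsLocalMin F y := Filter.Eventually.of_forall hmin
      set q : Euc dy → ℝ := fun θ => ‖θ - y‖ ^ 2 / (2 * γ) with hq
      have hdq : Differentiable ℝ q := by
        have h1 : Differentiable ℝ fun θ : Euc dy => ‖θ - y‖ ^ 2 :=
          Differentiable.norm_sq ℝ (differentiable_id.sub_const y)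
        simp only [hq, div_eq_mul_inv]
        exact h1.mul_const _
      have hlocq : IsLocalMin q y := by
        apply Filter.Eventually.of_forall
        intro θ
        simp only [hq, sub_self, norm_zero]
        rw [show (0:ℝ) ^ 2 / (2 * γ) = 0 by ring]
        positivity
      have hfq : fderiv ℝ q y = 0 := hlocq.fderiv_eq_zero
      have hfF : fderiv ℝ F y = 0 := hlocF.fderiv_eq_zero
      have hsum : fderiv ℝ F y = fderiv ℝ (fun θ => G x θ) y + fderiv ℝ q y :=
        fderiv_add ((hG.2.1 x) y) (hdq y)
      have hf0 : fderiv ℝ (fun θ => G x θ) y = 0 := by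
        rw [hfF, hfq, add_zero] at hsum
        exact hsum.symm
      show gradient (fun y' => G x y') y = 0
      rw [gradient, hf0, map_zero]
    · intro h
      apply le_antisymm
      · apply le_ciInf
        intro θ
        have h1 := lower x y θ
        rw [h] at h1
        simp only [inner_zero_left, add_zero] at h1
        have h2 : 0 ≤ c * ‖θ - y‖ ^ 2 := mul_nonneg hc.le (sq_nonneg _)
        exact le_trans (le_add_of_nonneg_right h2) h1
      · have h := ciInf_le (bdd x y) y
        simpa [moreau] using h
  refine ⟨hiff, ?_⟩
  ext p
  simp only [Set.mem_setOf_eq]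
  constructor
  · intro h
    have h1 := part1 γ hγ p.1 p.2 (bdd p.1 p.2)
    have : G p.1 p.2 = moreau G γ p.1 p.2 := by linarith
    exact (hiff p.1 p.2).mp this
  · intro h
    have := (hiff p.1 p.2).mpr h
    linarith
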